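/- Let x, y be two nonzero vectors in F_2^{2n}. Then either there exists h in F_2^{2n} such that y = Z_h x, or there exist h_1, h_2 in F_2^{2n} such that y = Z_{h_1} (Z_{h_2} x). In other words, x can be mapped to y by a product of at most two symplectic transvections. -/
import Mathlib

open Matrix Finset

def Lam (n : ℕ) : Matrix (Fin (2 * n)) (Fin (2 * n)) (ZMod 2) :=
  Matrix.of fun i j => if i.val / 2 = j.val / 2 ∧ i ≠ j then 1 else 0

def sip {n : ℕ} (v w : Fin (2 * n) → ZMod 2) : ZMod 2 :=
  v ⬝ᵥ (Lam n).mulVec w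

def Zt {n : ℕ} (h v : Fin (2 * n) → ZMod 2) : Fin (2 * n) → ZMod 2 :=
  v + sip v h • h

/-- partner index -/
def prt {n : ℕ} (k : Fin (2 * n)) : Fin (2 * n) :=
  ⟨if k.val % 2 = 0 then k.val + 1 else k.val - 1, by
    rcases k with ⟨v, hv⟩; dsimp; split <;> omega⟩

lemma prt_prt {n : ℕ} (k : Fin (2 * n)) : prt (prt k) = k := by
  rcases k with ⟨v, hv⟩
  apply Fin.ext
  simp only [prt]
  split <;> split <;> omega

lemma prt_ne {n : ℕ} (k : Fin (2 * n)) : prt k ≠ k := by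
  intro h
  have := congrArg Fin.val h
  simp only [prt] at this
  split at this <;> omega

lemma Lam_apply {n : ℕ} (i j : Fin (2 * n)) :
    Lam n i j = if j = prt i then 1 else 0 := by
  have h : (i.val / 2 = j.val / 2 ∧ i ≠ j) ↔ j = prt i := by
    rw [Fin.ne_iff_vne, Fin.ext_iff]
    simp only [prt]
    by_cases h : i.val % 2 = 0 <;> simp [h] <;> omega
  simp only [Lam, Matrix.of_apply]
  rw [if_congr h rfl rfl]

lemma sip_eq {n : ℕ} (v w : Fin (2 * n) → ZMod 2) :
    sip v w = ∑ i, v i * w (prt i) := by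
  unfold sip Matrix.mulVec
  simp only [dotProduct, Lam_apply, ite_mul, one_mul, zero_mul]
  congr 1; funext i
  rw [Finset.sum_ite_eq' Finset.univ (prt i) w]
  simp

lemma zmod2_cases (a : ZMod 2) : a = 0 ∨ a = 1 := by revert a; decide

lemma sip_self {n : ℕ} (v : Fin (2 * n) → ZMod 2) : sip v v = 0 := by
  rw [sip_eq]
  apply Finset.sum_involution (fun i _ => prt i)
  · intro i _
    rw [prt_prt, mul_comm]
    exact CharTwo.add_self_eq_zero _
  · intro i _ _
    exact prt_ne i
  · intro i _; exact Finset.mem_univ _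
  · intro i _; exact prt_prt i

lemma sip_comm {n : ℕ} (v w : Fin (2 * n) → ZMod 2) : sip v w = sip w v := by
  rw [sip_eq, sip_eq]
  refine Finset.sum_nbij' (fun i => prt i) (fun i => prt i) (by simp) (by simp)
    (fun i _ => prt_prt i) (fun i _ => prt_prt i) ?_
  intro i _
  rw [prt_prt, mul_comm]

lemma sip_add_right {n : ℕ} (v w₁ w₂ : Fin (2 * n) → ZMod 2) :
    sip v (w₁ + w₂) = sip v w₁ + sip v w₂ := by
  simp [sip_eq, mul_add, Finset.sum_add_distrib]

lemma sip_zero {n : ℕ} (v : Fin (2 * n) → ZMod 2) : sip v 0 = 0 := by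
  simp [sip_eq]

lemma sip_single {n : ℕ} (v : Fin (2 * n) → ZMod 2) (j : Fin (2 * n)) :
    sip v (Pi.single j 1) = v (prt j) := by
  rw [sip_eq]
  have : ∀ i : Fin (2 * n), v i * (Pi.single j 1 : Fin (2 * n) → ZMod 2) (prt i)
      = if i = prt j then v i else 0 := by
    intro i
    rw [Pi.single_apply]
    by_cases h : prt i = j
    · have hi : i = prt j := by rw [← h, prt_prt]
      subst hi
      simp [prt_prt]
    · have h2 : i ≠ prt j := fun hc => h (by rw [hc, prt_prt])
      simp [h, h2]
  simp only [this]
  rw [Finset.sum_ite_eq' Finset.univ (prt j) v]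
  simp

/-- Any nonzero vector can be mapped to any nonzero vector by a product of at most
two symplectic transvections. -/
theorem exists_transvections (n : ℕ) (hn : 1 ≤ n) (x y : Fin (2 * n) → ZMod 2)
    (hx : x ≠ 0) (hy : y ≠ 0) :
    (∃ h : Fin (2 * n) → ZMod 2, y = Zt h x) ∨
    (∃ h₁ h₂ : Fin (2 * n) → ZMod 2, y = Zt h₁ (Zt h₂ x)) := by
  by_cases hxy : x = y
  · left; exact ⟨0, by simp [Zt, sip_zero, hxy]⟩
  rcases zmod2_cases (sip x y) with hs | hs
  · -- sip x y = 0 case: need two transvections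
    right
    -- find z with sip x z = 1 and sip y z = 1
    obtain ⟨i, hi⟩ : ∃ i, x i = 1 := by
      by_contra h
      push_neg at h
      apply hx; funext k
      rcases zmod2_cases (x k) with h0 | h1
      · exact h0
      · exact absurd h1 (h k)
    obtain ⟨j, hj⟩ : ∃ j, y j = 1 := by
      by_contra h
      push_neg at h
      apply hy; funext k
      rcases zmod2_cases (y k) with h0 | h1
      · exact h0
      · exact absurd h1 (h k)
    obtain ⟨z, hzx, hzy⟩ : ∃ z : Fin (2 * n) → ZMod 2, sip x z = 1 ∧ sip y z = 1 := by
      by_cases hc : ∃ k, x k = 1 ∧ y k = 1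
      · obtain ⟨k, hk1, hk2⟩ := hc
        refine ⟨Pi.single (prt k) 1, ?_, ?_⟩ <;> rw [sip_single, prt_prt]
        · exact hk1
        · exact hk2
      · push_neg at hc
        have hyi : y i = 0 := by
          rcases zmod2_cases (y i) with h0 | h1
          · exact h0
          · exact absurd h1 (hc i hi)
        have hxj : x j = 0 := by
          rcases zmod2_cases (x j) with h0 | h1
          · exact h0
          · exact absurd hj (hc j h1)
        refine ⟨Pi.single (prt i) 1 + Pi.single (prt j) 1, ?_, ?_⟩ <;>
          rw [sip_add_right, sip_single, sip_single, prt_prt, prt_prt]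
        · rw [hi, hxj, add_zero]
        · rw [hyi, hj, zero_add]
    refine ⟨y + z, x + z, ?_⟩
    have h1 : Zt (x + z) x = z := by
      unfold Zt
      rw [sip_add_right, sip_self, hzx, zero_add, one_smul]
      funext k
      simp only [Pi.add_apply]
      rw [← add_assoc, CharTwo.add_self_eq_zero, zero_add]
    rw [h1]
    unfold Zt
    rw [sip_add_right, sip_self, add_zero, ← sip_comm, hzy, one_smul]
    funext k
    simp only [Pi.add_apply]
    rw [add_comm (y k) (z k), ← add_assoc, CharTwo.add_self_eq_zero, zero_add]
  · -- sip x y = 1: one transvection with h = x + y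
    left
    refine ⟨x + y, ?_⟩
    unfold Zt
    rw [sip_add_right, sip_self, zero_add, hs, one_smul]
    funext k
    simp only [Pi.add_apply]
    rw [← add_assoc, CharTwo.add_self_eq_zero, zero_add]
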